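/- arXiv:2208.10999 — 4 statements merged into one kernel-verified Lean document; each statement's English description precedes it below -/
import Mathlib

section
/- Let H be an RKHS on ℂⁿ with kernel K satisfying K_p(0) = 1/c for all p (c > 0). Suppose U : ℂⁿ → ℂ and Γ : ℂⁿ → ℂⁿ are such that C_{U,Γ} is bounded on H, C_{U,Γ}* K_z = conj(U(z)) K_{Γ(z)}, and C_{U,Γ} is self-adjoint. Then U(0) is real and U(z) = c · U(0) · K_{Γ(0)}(z) for all z ∈ ℂⁿ. -/
/-- If `H` is an RKHS on `ℂⁿ` with `K_p(0) = 1/c` for all `p` (`c > 0`), the bounded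
weighted composition operator `C_{U,Γ}` satisfies `C_{U,Γ}* K_z = conj (U z) • K_{Γ z}`,
and `C_{U,Γ}` is self-adjoint, then `U 0` is real and `U z = c * U 0 * K_{Γ 0} z`. -/
theorem stmt15 {n : ℕ} {H : Type*} [NormedAddCommGroup H] [InnerProductSpace ℂ H]
    [CompleteSpace H]
    (ev : H → EuclideanSpace ℂ (Fin n) → ℂ) (K : EuclideanSpace ℂ (Fin n) → H)
    (hrep : ∀ (f : H) (p : EuclideanSpace ℂ (Fin n)), ev f p = (inner ℂ (K p) f : ℂ))
    (c : ℝ) (hc : 0 < c)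
    (hK0 : ∀ p : EuclideanSpace ℂ (Fin n), ev (K p) 0 = 1 / c)
    (U : EuclideanSpace ℂ (Fin n) → ℂ) (Γ : EuclideanSpace ℂ (Fin n) → EuclideanSpace ℂ (Fin n))
    (T : H →L[ℂ] H)
    (hT : ∀ (f : H) (x : EuclideanSpace ℂ (Fin n)), ev (T f) x = U x * ev f (Γ x))
    (hadj : ∀ z, (ContinuousLinearMap.adjoint T) (K z) = (starRingEnd ℂ (U z)) • K (Γ z))
    (hsa : ContinuousLinearMap.adjoint T = T) :
    (U 0).im = 0 ∧ ∀ z, U z = (c : ℂ) * U 0 * ev (K (Γ 0)) z := by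
  have hTK : ∀ z, T (K z) = (starRingEnd ℂ (U z)) • K (Γ z) := by
    intro z; rw [← hsa]; exact hadj z
  have key : ∀ z x, (starRingEnd ℂ (U z)) * ev (K (Γ z)) x = U x * ev (K z) (Γ x) := by
    intro z x
    have h := hT (K z) x
    rw [hTK z, hrep, inner_smul_right, ← hrep] at h
    exact h
  -- ev (K z) (Γ 0) = conj (ev (K (Γ 0)) z)
  have hconj : ∀ z, ev (K z) (Γ 0) = starRingEnd ℂ (ev (K (Γ 0)) z) := by
    intro z
    rw [hrep, hrep, ← inner_conj_symm]
  have heq : ∀ z, starRingEnd ℂ (U z) * (1 / (c : ℂ)) = U 0 * ev (K z) (Γ 0) := by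
    intro z
    have h := key z 0
    rwa [hK0] at h
  have hcne : (c : ℂ) ≠ 0 := by exact_mod_cast hc.ne'
  have hU0 : starRingEnd ℂ (U 0) = U 0 := by
    have h := heq 0
    rw [hconj 0, hK0] at h
    have : starRingEnd ℂ ((1 : ℂ) / c) = 1 / (c : ℂ) := by
      simp [map_div₀, Complex.conj_ofReal]
    rw [this] at h
    field_simp at h
    exact h
  constructor
  · exact Complex.conj_eq_iff_im.mp hU0
  · intro z
    have h := heq z
    rw [hconj z] at h
    have h2 := congrArg (starRingEnd ℂ) h
    simp only [map_mul, map_div₀, map_one, Complex.conj_ofReal,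
      RingHomCompTriple.comp_apply, Complex.conj_conj, hU0] at h2
    simp only [RingHom.id_apply] at h2
    field_simp at h2
    rw [h2]
end

section
/- Let H be an RKHS on ℂⁿ with kernel K satisfying K_p(0) = K_0(p) = 1/c for all p (c > 0), and suppose U₁, U₂ : ℂⁿ → ℂ, Γ₁, Γ₂ : ℂⁿ → ℂⁿ give bounded weighted composition operators with C_{U₁,Γ₁}* = C_{U₂,Γ₂} and C_{U,Γ}* K_z = conj(U(z)) K_{Γ(z)}. Then U₂(0) = conj(U₁(0)), U₁(z) = c·U₁(0)·K_{Γ₂(0)}(z) and U₂(z) = c·conj(U₁(0))·K_{Γ₁(0)}(z) for all z ∈ ℂⁿ. In particular, if U₁(0) = 0 then U₁ ≡ 0 and U₂ ≡ 0. -/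
/-- If `H` is an RKHS on `ℂⁿ` with `K_p(0) = K_0(p) = 1/c` (`c > 0`), and bounded
weighted composition operators satisfy `C_{U₁,Γ₁}* = C_{U₂,Γ₂}` (with the usual adjoint
action on kernels), then `U₂ 0 = conj (U₁ 0)`, `U₁ z = c·U₁(0)·K_{Γ₂ 0}(z)`,
`U₂ z = c·conj(U₁ 0)·K_{Γ₁ 0}(z)`; in particular if `U₁ 0 = 0` then `U₁ ≡ 0 ≡ U₂`. -/
theorem stmt16 {n : ℕ} {H : Type*} [NormedAddCommGroup H] [InnerProductSpace ℂ H]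
    [CompleteSpace H]
    (ev : H → EuclideanSpace ℂ (Fin n) → ℂ) (K : EuclideanSpace ℂ (Fin n) → H)
    (hrep : ∀ (f : H) (p : EuclideanSpace ℂ (Fin n)), ev f p = (inner ℂ (K p) f : ℂ))
    (c : ℝ) (hc : 0 < c)
    (hK0 : ∀ p : EuclideanSpace ℂ (Fin n), ev (K p) 0 = 1 / c)
    (hK0' : ∀ p : EuclideanSpace ℂ (Fin n), ev (K 0) p = 1 / c)
    (U₁ U₂ : EuclideanSpace ℂ (Fin n) → ℂ)
    (Γ₁ Γ₂ : EuclideanSpace ℂ (Fin n) → EuclideanSpace ℂ (Fin n))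
    (T₁ T₂ : H →L[ℂ] H)
    (hT₁ : ∀ (f : H) (x : EuclideanSpace ℂ (Fin n)), ev (T₁ f) x = U₁ x * ev f (Γ₁ x))
    (hT₂ : ∀ (f : H) (x : EuclideanSpace ℂ (Fin n)), ev (T₂ f) x = U₂ x * ev f (Γ₂ x))
    (hadj₁ : ∀ z, (ContinuousLinearMap.adjoint T₁) (K z) = (starRingEnd ℂ (U₁ z)) • K (Γ₁ z))
    (hadj₂ : ∀ z, (ContinuousLinearMap.adjoint T₂) (K z) = (starRingEnd ℂ (U₂ z)) • K (Γ₂ z))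
    (hstar : ContinuousLinearMap.adjoint T₁ = T₂) :
    U₂ 0 = starRingEnd ℂ (U₁ 0) ∧
    (∀ z, U₁ z = (c : ℂ) * U₁ 0 * ev (K (Γ₂ 0)) z) ∧
    (∀ z, U₂ z = (c : ℂ) * starRingEnd ℂ (U₁ 0) * ev (K (Γ₁ 0)) z) ∧
    (U₁ 0 = 0 → (∀ z, U₁ z = 0) ∧ (∀ z, U₂ z = 0)) := by

  have hcne : (c:ℂ) ≠ 0 := by exact_mod_cast hc.ne'
  have key : ∀ z x, U₂ x * ev (K z) (Γ₂ x) = starRingEnd ℂ (U₁ z) * ev (K (Γ₁ z)) x := by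
    intro z x
    have h1 : T₂ (K z) = (starRingEnd ℂ (U₁ z)) • K (Γ₁ z) := by rw [← hstar]; exact hadj₁ z
    have h2 := hT₂ (K z) x
    rw [h1, hrep, inner_smul_right, ← hrep] at h2
    exact h2.symm
  have hU₂ : ∀ x, U₂ x = (c : ℂ) * starRingEnd ℂ (U₁ 0) * ev (K (Γ₁ 0)) x := by
    intro x
    have h := key 0 x
    rw [hK0' (Γ₂ x)] at h
    field_simp at h ⊢
    linear_combination h
  have h0 : U₂ 0 = starRingEnd ℂ (U₁ 0) := by
    have := hU₂ 0
    rw [hK0 (Γ₁ 0)] at this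
    field_simp at this
    linear_combination this
  have hU₁ : ∀ z, U₁ z = (c : ℂ) * U₁ 0 * ev (K (Γ₂ 0)) z := by
    intro z
    have h := key z 0
    rw [hK0 (Γ₁ z), h0] at h
    have hconj : starRingEnd ℂ (ev (K z) (Γ₂ 0)) = ev (K (Γ₂ 0)) z := by
      rw [hrep, hrep, inner_conj_symm]
    have h' := congrArg (starRingEnd ℂ) h
    simp only [map_mul, RingHom.id_apply, Complex.conj_conj, map_div₀, map_one,
      Complex.conj_ofReal, hconj] at h'
    field_simp at h'
    linear_combination -h'
  exact ⟨h0, hU₁, hU₂, fun h => ⟨fun z => by rw [hU₁ z, h]; ring,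
    fun z => by rw [hU₂ z, h]; simp⟩⟩
end

section
/- Let H be an RKHS on ℂⁿ with kernel K where K₀ is the constant function 1/c (c > 0), let Γ(z) = Cz with C ∈ M_n(ℂ), and U : ℂⁿ → ℂ holomorphic with C_{U,Γ} bounded on H. If C_{U,Γ} C_{U,Γ}* = Id, then U(0) ≠ 0, U(z) = 1/conj(U(0)) for all z (U is constant), and |U(z)| = 1 for all z ∈ ℂⁿ. -/
/-- If `H` is an RKHS on `ℂⁿ` with `K₀(w) = K_p(0) = 1/c` (`c > 0`), `Γ z = C z` with
`C ∈ Mₙ(ℂ)`, and the bounded weighted composition operator `C_{U,Γ}` satisfies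
`C_{U,Γ} C_{U,Γ}* = Id`, then `U 0 ≠ 0`, `U` is the constant `1 / conj (U 0)`, and
`|U z| = 1` for all `z`. -/
theorem stmt17 {n : ℕ} {H : Type*} [NormedAddCommGroup H] [InnerProductSpace ℂ H]
    [CompleteSpace H]
    (ev : H → EuclideanSpace ℂ (Fin n) → ℂ) (K : EuclideanSpace ℂ (Fin n) → H)
    (hrep : ∀ (f : H) (p : EuclideanSpace ℂ (Fin n)), ev f p = (inner ℂ (K p) f : ℂ))
    (c : ℝ) (hc : 0 < c)
    (hK0 : ∀ w : EuclideanSpace ℂ (Fin n), ev (K 0) w = 1 / c)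
    (hK0' : ∀ p : EuclideanSpace ℂ (Fin n), ev (K p) 0 = 1 / c)
    (C : Matrix (Fin n) (Fin n) ℂ)
    (U : EuclideanSpace ℂ (Fin n) → ℂ)
    (Γ : EuclideanSpace ℂ (Fin n) → EuclideanSpace ℂ (Fin n))
    (hΓ : ∀ z, Γ z = (EuclideanSpace.equiv (Fin n) ℂ).symm
      (C.mulVec (EuclideanSpace.equiv (Fin n) ℂ z)))
    (hU : Differentiable ℂ (fun z : EuclideanSpace ℂ (Fin n) => U z))
    (T : H →L[ℂ] H)
    (hT : ∀ (f : H) (x : EuclideanSpace ℂ (Fin n)), ev (T f) x = U x * ev f (Γ x))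
    (hadj : ∀ z, (ContinuousLinearMap.adjoint T) (K z) = (starRingEnd ℂ (U z)) • K (Γ z))
    (hco : T ∘L ContinuousLinearMap.adjoint T = ContinuousLinearMap.id ℂ H) :
    U 0 ≠ 0 ∧ (∀ z, U z = 1 / starRingEnd ℂ (U 0)) ∧ (∀ z, ‖U z‖ = 1) := by
  have hΓ0 : Γ 0 = 0 := by
    rw [hΓ]
    simp [Matrix.mulVec_zero]
  have hcne : (1 / (c:ℂ)) ≠ 0 := by
    simp only [ne_eq, one_div, inv_eq_zero, Complex.ofReal_eq_zero]
    exact hc.ne'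
  have key : ∀ z, U 0 * starRingEnd ℂ (U z) = 1 := by
    intro z
    have h1 : T ((ContinuousLinearMap.adjoint T) (K z)) = K z :=
      congrArg (fun S : H →L[ℂ] H => S (K z)) hco
    rw [hadj] at h1
    have h2 := congrArg (fun f => ev f 0) h1
    rw [hK0'] at h2
    rw [hT, hΓ0, hrep, inner_smul_right, ← hrep, hK0'] at h2
    have h3 : U 0 * starRingEnd ℂ (U z) * (1 / (c:ℂ)) = 1 * (1 / (c:ℂ)) := by
      rw [one_mul]; linear_combination h2
    exact mul_right_cancel₀ hcne h3
  have hU0 : U 0 ≠ 0 := by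
    intro h
    have := key 0
    rw [h] at this
    simp at this
  have hconst : ∀ z, U z = 1 / starRingEnd ℂ (U 0) := by
    intro z
    have h := congrArg (starRingEnd ℂ) (key z)
    simp only [map_mul, map_one, Complex.conj_conj] at h
    have hc0 : starRingEnd ℂ (U 0) ≠ 0 := by
      simpa using hU0
    field_simp
    linear_combination h
  have hn0 : ‖U 0‖ = 1 := by
    have h := key 0
    have : ‖U 0 * starRingEnd ℂ (U 0)‖ = 1 := by rw [h]; simp
    rw [norm_mul, RCLike.norm_conj] at this
    nlinarith [norm_nonneg (U 0)]
  refine ⟨hU0, hconst, fun z => ?_⟩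
  rw [hconst z]
  simp [norm_div, RCLike.norm_conj, hn0]
end

section
/- Let {a_r}_{r≥0} be positive reals with F(t) = ∑ a_r t^r entire, C ∈ M_n(ℂ), D ∈ ℂⁿ. If F(⟨Cw - D, Cz - D⟩) = F(⟨w, z⟩) for all z, w ∈ ℂⁿ and C is invertible, then D = 0 and C is unitary. -/
/-- If `F t = ∑ a_r t^r` is entire with all `a_r > 0`, `C` is invertible, and
`F (⟨Cw - D, Cz - D⟩) = F (⟨w, z⟩)` for all `z, w ∈ ℂⁿ` (with `⟨x, y⟩ = ∑ xⱼ conj yⱼ`),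
then `D = 0` and `C` is unitary. -/
theorem stmt19 {n : ℕ} (a : ℕ → ℝ) (ha : ∀ r, 0 < a r) (F : ℂ → ℂ)
    (hF : ∀ t : ℂ, HasSum (fun r => (a r : ℂ) * t ^ r) (F t))
    (C : Matrix (Fin n) (Fin n) ℂ) (D : Fin n → ℂ) (hC : IsUnit C)
    (h : ∀ z w : Fin n → ℂ,
      F (dotProduct (C.mulVec w - D) (star (C.mulVec z - D))) =
        F (dotProduct w (star z))) :
    D = 0 ∧ C.conjTranspose * C = 1 := by
  -- F is strictly monotone on nonneg reals, hence injective there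
  have hmono : ∀ s t : ℝ, 0 ≤ s → s < t → (F s).re < (F t).re := by
    intro s t hs hst
    have hs' := Complex.hasSum_re (hF (s : ℂ))
    have ht' := Complex.hasSum_re (hF (t : ℂ))
    have hs'' : HasSum (fun r => a r * s ^ r) (F s).re := by
      simpa [← Complex.ofReal_pow, ← Complex.ofReal_mul] using hs'
    have ht'' : HasSum (fun r => a r * t ^ r) (F t).re := by
      simpa [← Complex.ofReal_pow, ← Complex.ofReal_mul] using ht'
    refine hasSum_lt (f := fun r => a r * s ^ r) (g := fun r => a r * t ^ r)
      (fun r => ?_) (i := 1) ?_ hs'' ht''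
    · exact mul_le_mul_of_nonneg_left (pow_le_pow_left₀ hs hst.le r) (ha r).le
    · simpa using mul_lt_mul_of_pos_left (by simpa using hst) (ha 1)
  have hinj : ∀ s t : ℝ, 0 ≤ s → 0 ≤ t → F s = F t → s = t := by
    intro s t hs ht hFst
    rcases lt_trichotomy s t with hlt | heq | hgt
    · exact absurd (congrArg Complex.re hFst) (ne_of_lt (hmono s t hs hlt))
    · exact heq
    · exact absurd (congrArg Complex.re hFst) (ne_of_gt (hmono t s ht hgt))
  -- dot product of a vector with its star is a nonneg real
  have hdot : ∀ v : Fin n → ℂ,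
      dotProduct v (star v) = ((∑ i, Complex.normSq (v i) : ℝ) : ℂ) := by
    intro v
    simp only [dotProduct, Pi.star_apply]
    push_cast
    exact Finset.sum_congr rfl fun i _ => (Complex.mul_conj (v i))
  have hnonneg : ∀ v : Fin n → ℂ, 0 ≤ ∑ i, Complex.normSq (v i) :=
    fun v => Finset.sum_nonneg fun i _ => Complex.normSq_nonneg _
  -- norm equality
  have key : ∀ w : Fin n → ℂ,
      dotProduct (C.mulVec w - D) (star (C.mulVec w - D)) =
        dotProduct w (star w) := by
    intro w
    have := h w w
    rw [hdot (C.mulVec w - D), hdot w] at this ⊢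
    exact_mod_cast congrArg (fun x : ℝ => (x : ℂ))
      (hinj _ _ (hnonneg _) (hnonneg _) this)
  -- D = 0
  have hD : D = 0 := by
    have h0 := key 0
    rw [Matrix.mulVec_zero, zero_sub, hdot (-D), hdot (0 : Fin n → ℂ)] at h0
    have h0' : (∑ i, Complex.normSq ((-D) i)) = ∑ i, Complex.normSq ((0 : Fin n → ℂ) i) := by
      exact_mod_cast h0
    simp only [Pi.zero_apply, Complex.normSq_zero, Finset.sum_const_zero] at h0'
    funext i
    have := (Finset.sum_eq_zero_iff_of_nonneg
      (fun j _ => Complex.normSq_nonneg ((-D) j))).mp h0' i (Finset.mem_univ i)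
    simpa [Complex.normSq_eq_zero] using this
  subst hD
  refine ⟨rfl, ?_⟩
  have key' : ∀ w : Fin n → ℂ,
      dotProduct (C.mulVec w) (star (C.mulVec w)) = dotProduct w (star w) := by
    intro w
    simpa using key w
  -- polarization
  have key2 : ∀ w z : Fin n → ℂ,
      dotProduct (C.mulVec w) (star (C.mulVec z)) = dotProduct w (star z) := by
    intro w z
    have h1 := key' (w + z)
    have h2 := key' (w + Complex.I • z)
    have hw := key' w
    have hz := key' z
    simp only [Matrix.mulVec_add, Matrix.mulVec_smul, star_add, star_smul,
      dotProduct_add, add_dotProduct, dotProduct_smul,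
      smul_dotProduct, smul_eq_mul, Complex.star_def, Complex.conj_I,
      RCLike.star_def] at h1 h2
    linear_combination (1/2 : ℂ) * h1 + (Complex.I/2) * h2
      - ((1:ℂ)/2 + Complex.I/2) * hw - ((1:ℂ)/2 + Complex.I/2) * hz
      + (dotProduct (C.mulVec w) (star (C.mulVec z)) / 2
        + dotProduct z (star w) / 2
        - dotProduct w (star z) / 2
        - Complex.I / 2 * dotProduct z (star z)
        + Complex.I / 2 * dotProduct (C.mulVec z) (star (C.mulVec z))
        - dotProduct (C.mulVec z) (star (C.mulVec w)) / 2) * Complex.I_sq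
  ext i j
  have := key2 (Pi.single j 1) (Pi.single i 1)
  simp only [Matrix.mulVec_single, mul_one, MulOpposite.op_one, one_smul] at this
  have lhs_eq : dotProduct (fun k => C k j) (star fun k => C k i) =
      (C.conjTranspose * C) i j := by
    simp [Matrix.mul_apply, dotProduct, Matrix.conjTranspose_apply, mul_comm]
  have rhs_eq : dotProduct (Pi.single j (1:ℂ)) (star (Pi.single i (1:ℂ))) =
      (1 : Matrix (Fin n) (Fin n) ℂ) i j := by
    by_cases hij : i = j <;>
      simp [dotProduct, Pi.single_apply, Matrix.one_apply, hij, eq_comm,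
        apply_ite (starRingEnd ℂ)]
  rw [← lhs_eq, ← rhs_eq]
  exact this
end
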